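/- Let μ₁, μ₂ be finite nonnegative Radon measures with positive masses M₁, M₂, both supported in a bounded interval K, and let μ̃ᵢ = μᵢ/Mᵢ. Define ρ(μ₁,μ₂) = min(M₁,M₂) · W₁(μ̃₁,μ̃₂) + |M₁ - M₂|. Then ρ(μ₁, μ₂) ≤ 3 max(1, |K|/2) · ρ_F(μ₁, μ₂); equivalently, (1/3) min(1, 2/|K|) ρ(μ₁,μ₂) ≤ ρ_F(μ₁,μ₂). -/

import Mathlib

/-!
Shift a 1-Lipschitz test function `φ` by its value at the midpoint of `K` and clamp it at
height `|K|/2`. On `K` this changes nothing, so with `Aᵢ = ∫ ψ dμᵢ` for the clamped function `ψ`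
we get `∫ φ dμ̃₁ - ∫ φ dμ̃₂ = A₁/M₁ - A₂/M₂`, while `|Aᵢ| ≤ C Mᵢ` for `C = max 1 (|K|/2)` and
`ψ / C` is admissible for `ρ_F`. Hence
`min M₁ M₂ (A₁/M₁ - A₂/M₂) ≤ A₁ - A₂ + C |M₁ - M₂| ≤ 2 C ρ_F`, and testing against the
constants `±1` gives `|M₁ - M₂| ≤ ρ_F ≤ C ρ_F`.
-/

open MeasureTheory

noncomputable def flatDist (μ ν : Measure ℝ) : ℝ :=
  sSup {r : ℝ | ∃ φ : ℝ → ℝ, LipschitzWith 1 φ ∧ (∀ x, |φ x| ≤ 1) ∧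
    r = ∫ x, φ x ∂μ - ∫ x, φ x ∂ν}

noncomputable def W1 (μ ν : Measure ℝ) : ℝ :=
  sSup {r : ℝ | ∃ φ : ℝ → ℝ, LipschitzWith 1 φ ∧
    r = ∫ x, φ x ∂μ - ∫ x, φ x ∂ν}

open Set

section FlatDist

variable {μ ν : Measure ℝ} [IsFiniteMeasure μ] [IsFiniteMeasure ν]

lemma integral_sub_le_flatDist {φ : ℝ → ℝ} (hφ : LipschitzWith 1 φ) (hb : ∀ x, |φ x| ≤ 1) :
    ∫ x, φ x ∂μ - ∫ x, φ x ∂ν ≤ flatDist μ ν := by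
  refine le_csSup ⟨μ.real univ + ν.real univ, ?_⟩ ⟨φ, hφ, hb, rfl⟩
  rintro _ ⟨ψ, -, hψ, rfl⟩
  have hbound : ∀ (ρ : Measure ℝ) [IsFiniteMeasure ρ], |∫ x, ψ x ∂ρ| ≤ ρ.real univ :=
    fun ρ _ => by
      simpa using norm_integral_le_of_norm_le_const (μ := ρ) (f := ψ) (C := 1) (ae_of_all _ hψ)
  linarith [le_abs_self (∫ x, ψ x ∂μ), neg_abs_le (∫ x, ψ x ∂ν), hbound μ, hbound ν]

lemma flatDist_nonneg : 0 ≤ flatDist μ ν := by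
  simpa using integral_sub_le_flatDist (μ := μ) (ν := ν) (LipschitzWith.const' 0) (by simp)

lemma abs_real_univ_sub_le_flatDist : |μ.real univ - ν.real univ| ≤ flatDist μ ν := by
  rw [abs_sub_le_iff]
  constructor
  · simpa using integral_sub_le_flatDist (μ := μ) (ν := ν) (LipschitzWith.const' 1) (by simp)
  · have := integral_sub_le_flatDist (μ := μ) (ν := ν) (LipschitzWith.const' (-1)) (by simp)
    simp only [integral_const, smul_eq_mul, mul_neg, mul_one] at this
    linarith

lemma integral_sub_le_mul_flatDist {φ : ℝ → ℝ} {C : ℝ} (hφ : LipschitzWith 1 φ)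
    (hb : ∀ x, |φ x| ≤ C) (hC : 1 ≤ C) :
    ∫ x, φ x ∂μ - ∫ x, φ x ∂ν ≤ C * flatDist μ ν := by
  have hC₀ : 0 < C := one_pos.trans_le hC
  have hLip : LipschitzWith 1 fun x => C⁻¹ * φ x := by
    refine ((lipschitzWith_smul C⁻¹).comp hφ).weaken ?_
    rw [mul_one, ← NNReal.coe_le_coe, coe_nnnorm, Real.norm_eq_abs, abs_inv, abs_of_pos hC₀]
    exact inv_le_one_of_one_le₀ hC
  have hbound : ∀ x, |C⁻¹ * φ x| ≤ 1 := fun x => by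
    rw [abs_mul, abs_inv, abs_of_pos hC₀, inv_mul_le_iff₀ hC₀, mul_one]
    exact hb x
  have := integral_sub_le_flatDist (μ := μ) (ν := ν) hLip hbound
  rw [integral_const_mul, integral_const_mul, ← mul_sub, inv_mul_le_iff₀ hC₀] at this
  exact this

end FlatDist

lemma W1_le {μ ν : Measure ℝ} {B : ℝ}
    (h : ∀ φ : ℝ → ℝ, LipschitzWith 1 φ → ∫ x, φ x ∂μ - ∫ x, φ x ∂ν ≤ B) : W1 μ ν ≤ B :=
  csSup_le ⟨0, fun _ => 0, LipschitzWith.const' 0, by simp⟩ fun _ ⟨φ, hφ, hr⟩ => hr ▸ h φ hφ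

lemma LipschitzWith.exists_abs_le_eqOn_Icc {K : NNReal} {φ : ℝ → ℝ} (hφ : LipschitzWith K φ)
    {a b : ℝ} (hab : a ≤ b) :
    ∃ (ψ : ℝ → ℝ) (c : ℝ), LipschitzWith K ψ ∧ (∀ x, |ψ x| ≤ K * ((b - a) / 2)) ∧
      EqOn φ (fun x => ψ x + c) (Icc a b) := by
  set R : ℝ := K * ((b - a) / 2)
  have hR : 0 ≤ R := mul_nonneg K.2 (by linarith)
  set c := φ ((a + b) / 2)
  have hφc : LipschitzWith K fun x => φ x - c := by
    simpa using hφ.sub (LipschitzWith.const (α := ℝ) c)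
  refine ⟨fun x => max (min (φ x - c) R) (-R), c, (hφc.min_const R).max_const (-R),
    fun x => abs_le.2 ⟨le_max_right _ _, max_le (min_le_right _ _) (by linarith)⟩, ?_⟩
  intro x hx
  have hclose : |φ x - c| ≤ R := by
    calc |φ x - c| ≤ K * |x - (a + b) / 2| := by
          simpa [Real.dist_eq] using hφ.dist_le_mul x ((a + b) / 2)
      _ ≤ R := mul_le_mul_of_nonneg_left (abs_le.2 ⟨by linarith [hx.1], by linarith [hx.2]⟩) K.2
  obtain ⟨hlo, hhi⟩ := abs_le.1 hclose
  simp [min_eq_left hhi, max_eq_left hlo]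

lemma integral_normalized_eq_of_eqOn {μ : Measure ℝ} [IsFiniteMeasure μ] (hμ : μ.real univ ≠ 0)
    {s : Set ℝ} (hs : μ sᶜ = 0) {φ ψ : ℝ → ℝ} {c : ℝ} (hψ : Integrable ψ μ)
    (hφ : EqOn φ (fun x => ψ x + c) s) :
    ∫ x, φ x ∂((μ univ)⁻¹ • μ) = (∫ x, ψ x ∂μ) / μ.real univ + c := by
  have hae : φ =ᵐ[μ] fun x => ψ x + c := Filter.eventuallyEq_of_mem (mem_ae_iff.2 hs) hφ
  rw [integral_congr_ae (Measure.ae_smul_measure hae _), integral_smul_measure,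
    integral_add hψ (integrable_const c), integral_const, ENNReal.toReal_inv, ← measureReal_def,
    smul_eq_mul, smul_eq_mul]
  field_simp

lemma min_mul_div_sub_div_le {M₁ M₂ A₁ A₂ C : ℝ} (hM₁ : 0 < M₁) (hM₂ : 0 < M₂)
    (hA₁ : |A₁| ≤ C * M₁) (hA₂ : |A₂| ≤ C * M₂) :
    min M₁ M₂ * (A₁ / M₁ - A₂ / M₂) ≤ A₁ - A₂ + C * |M₁ - M₂| := by
  rcases le_total M₁ M₂ with h | h
  · have hA : A₂ / M₂ ≤ C := (div_le_iff₀ hM₂).2 (le_abs_self A₂ |>.trans hA₂)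
    have key : M₁ * (A₁ / M₁ - A₂ / M₂) = A₁ - A₂ + (M₂ - M₁) * (A₂ / M₂) := by
      field_simp; ring
    rw [min_eq_left h, key, abs_of_nonpos (by linarith), neg_sub, mul_comm C]
    gcongr
  · have hA : -(A₁ / M₁) ≤ C := by
      rw [neg_le, le_div_iff₀ hM₁]; linarith [neg_abs_le A₁]
    have key : M₂ * (A₁ / M₁ - A₂ / M₂) = A₁ - A₂ + (M₁ - M₂) * -(A₁ / M₁) := by
      field_simp; ring
    rw [min_eq_right h, key, abs_of_nonneg (by linarith), mul_comm C]
    gcongr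

lemma min_mul_integral_normalized_sub_le {k₁ k₂ : ℝ} (hk : k₁ ≤ k₂) {μ₁ μ₂ : Measure ℝ}
    [IsFiniteMeasure μ₁] [IsFiniteMeasure μ₂]
    (hs₁ : μ₁ (Icc k₁ k₂)ᶜ = 0) (hs₂ : μ₂ (Icc k₁ k₂)ᶜ = 0)
    (hM₁ : 0 < μ₁.real univ) (hM₂ : 0 < μ₂.real univ) {φ : ℝ → ℝ} (hφ : LipschitzWith 1 φ) :
    min (μ₁.real univ) (μ₂.real univ) *
        (∫ x, φ x ∂((μ₁ univ)⁻¹ • μ₁) - ∫ x, φ x ∂((μ₂ univ)⁻¹ • μ₂)) ≤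
      2 * max 1 ((k₂ - k₁) / 2) * flatDist μ₁ μ₂ := by
  set C := max 1 ((k₂ - k₁) / 2)
  obtain ⟨ψ, c, hψ, hψ_le, hφψ⟩ := hφ.exists_abs_le_eqOn_Icc hk
  have hψC : ∀ x, |ψ x| ≤ C := fun x => by simpa [C] using (hψ_le x).trans (le_max_right 1 _)
  have hψ_int : ∀ (ρ : Measure ℝ) [IsFiniteMeasure ρ], Integrable ψ ρ := fun ρ _ =>
    .of_bound hψ.continuous.aestronglyMeasurable C (ae_of_all _ hψC)
  have hψ_bound : ∀ (ρ : Measure ℝ) [IsFiniteMeasure ρ], |∫ x, ψ x ∂ρ| ≤ C * ρ.real univ :=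
    fun ρ _ => norm_integral_le_of_norm_le_const (f := ψ) (ae_of_all _ hψC)
  rw [integral_normalized_eq_of_eqOn hM₁.ne' hs₁ (hψ_int μ₁) hφψ,
    integral_normalized_eq_of_eqOn hM₂.ne' hs₂ (hψ_int μ₂) hφψ, add_sub_add_right_eq_sub]
  calc _ ≤ (∫ x, ψ x ∂μ₁ - ∫ x, ψ x ∂μ₂) + C * |μ₁.real univ - μ₂.real univ| :=
        min_mul_div_sub_div_le hM₁ hM₂ (hψ_bound μ₁) (hψ_bound μ₂)
    _ ≤ C * flatDist μ₁ μ₂ + C * flatDist μ₁ μ₂ := by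
        gcongr
        · exact integral_sub_le_mul_flatDist hψ hψC (le_max_left _ _)
        · exact abs_real_univ_sub_le_flatDist
    _ = 2 * C * flatDist μ₁ μ₂ := by ring

/-- For finite nonnegative measures with positive masses supported in a bounded
interval K, the quantity ρ(μ₁,μ₂) = min(M₁,M₂) W₁(μ̃₁,μ̃₂) + |M₁-M₂| satisfies
ρ(μ₁,μ₂) ≤ 3 max(1,|K|/2) ρ_F(μ₁,μ₂). -/
theorem rho_le_flatDist (k₁ k₂ : ℝ) (hk : k₁ ≤ k₂) (μ₁ μ₂ : Measure ℝ)
    [IsFiniteMeasure μ₁] [IsFiniteMeasure μ₂]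
    (hs1 : μ₁ (Set.Icc k₁ k₂)ᶜ = 0) (hs2 : μ₂ (Set.Icc k₁ k₂)ᶜ = 0)
    (hM1 : 0 < (μ₁ Set.univ).toReal) (hM2 : 0 < (μ₂ Set.univ).toReal) :
    min (μ₁ Set.univ).toReal (μ₂ Set.univ).toReal *
        W1 ((μ₁ Set.univ)⁻¹ • μ₁) ((μ₂ Set.univ)⁻¹ • μ₂) +
      |(μ₁ Set.univ).toReal - (μ₂ Set.univ).toReal| ≤
      3 * max 1 ((k₂ - k₁) / 2) * flatDist μ₁ μ₂ := by
  simp only [← measureReal_def] at hM1 hM2 ⊢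
  have hm := lt_min hM1 hM2
  have hW1 := (le_div_iff₀' hm).1 <| W1_le fun φ hφ =>
    (le_div_iff₀' hm).2 (min_mul_integral_normalized_sub_le hk hs1 hs2 hM1 hM2 hφ)
  have hF : flatDist μ₁ μ₂ ≤ max 1 ((k₂ - k₁) / 2) * flatDist μ₁ μ₂ :=
    le_mul_of_one_le_left flatDist_nonneg (le_max_left _ _)
  linarith [abs_real_univ_sub_le_flatDist (μ := μ₁) (ν := μ₂)]
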